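/- Let μ₁, μ₂ > 0 and suppose v̂(μ₁) and v̂(μ₂) are centered points for parameters μ₁ and μ₂ respectively. Then (1/m)·h(v̂(μ₁), v̂(μ₂)) ≤ q((1/2)·log(μ₁/μ₂)), where q(t) := 2(cosh(t) − 1). -/

import Mathlib

/-!
With `y := x₁ - x₂`, subtracting the centering equations for `μ₁` and `μ₂` gives
`Aᵀ(√μ₁ eᵛ¹ - √μ₂ eᵛ²) = W y` and `√μ₁ e^{-v₁} - √μ₂ e^{-v₂} = A y`, so pairing the two
differences yields `yᵀ W y ≥ 0`. Expanded, this pairing is `(μ₁ + μ₂) m - √μ₁√μ₂ (h(v₁,v₂) + 2m)`,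
and `(μ₁ + μ₂) / (√μ₁√μ₂) - 2 = q(½ log(μ₁/μ₂))`.
-/

open Matrix

/-- Elementwise exponentiation `e^v` of a vector. -/
noncomputable def expV {m : ℕ} (v : Fin m → ℝ) : Fin m → ℝ := fun i => Real.exp (v i)

/-- The log-domain Newton system: `(d, x)` satisfies
`√μ·Aᵀ(eᵛ + eᵛ∘d) = Wx + c` and `√μ·(e^{−v} − e^{−v}∘d) = Ax + b`. -/
noncomputable def IsNewton {m n : ℕ} (A : Matrix (Fin m) (Fin n) ℝ) (b : Fin m → ℝ)
    (c : Fin n → ℝ) (W : Matrix (Fin n) (Fin n) ℝ) (μ : ℝ) (v d : Fin m → ℝ)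
    (x : Fin n → ℝ) : Prop :=
  Real.sqrt μ • (Aᵀ).mulVec (expV v + expV v * d) = W.mulVec x + c ∧
  Real.sqrt μ • (expV (-v) - expV (-v) * d) = A.mulVec x + b

/-- `v` is a centered point for parameter `μ`, witnessed by `x`:
`√μ·Aᵀeᵛ = Wx + c` and `√μ·e^{−v} = Ax + b`. -/
noncomputable def IsCentered {m n : ℕ} (A : Matrix (Fin m) (Fin n) ℝ) (b : Fin m → ℝ)
    (c : Fin n → ℝ) (W : Matrix (Fin n) (Fin n) ℝ) (μ : ℝ) (v : Fin m → ℝ)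
    (x : Fin n → ℝ) : Prop :=
  Real.sqrt μ • (Aᵀ).mulVec (expV v) = W.mulVec x + c ∧
  Real.sqrt μ • expV (-v) = A.mulVec x + b

/-- The divergence `h(u,v) := ⟨eᵘ, e^{−v}⟩ + ⟨e^{−u}, eᵛ⟩ − 2m`. -/
noncomputable def diverg {m : ℕ} (u v : Fin m → ℝ) : ℝ :=
  (∑ i, Real.exp (u i) * Real.exp (-v i)) + (∑ i, Real.exp (-u i) * Real.exp (v i))
    - 2 * m

/-- The Euclidean norm of a vector in `ℝᵐ`. -/
noncomputable def enorm {m : ℕ} (d : Fin m → ℝ) : ℝ := Real.sqrt (∑ i, d i ^ 2)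

lemma expV_dotProduct_expV_neg {m : ℕ} (v : Fin m → ℝ) : expV v ⬝ᵥ expV (-v) = m := by
  simp [dotProduct, expV, ← Real.exp_add]

lemma diverg_eq_dotProduct {m : ℕ} (u v : Fin m → ℝ) :
    diverg u v = expV u ⬝ᵥ expV (-v) + expV v ⬝ᵥ expV (-u) - 2 * m := by
  simp only [diverg, dotProduct, expV, Pi.neg_apply]
  rw [Finset.sum_congr rfl fun i _ => mul_comm (Real.exp (-u i)) (Real.exp (v i))]

lemma dotProduct_smul_expV_sub {m : ℕ} (s t : ℝ) (u v : Fin m → ℝ) :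
    (s • expV u - t • expV v) ⬝ᵥ (s • expV (-u) - t • expV (-v))
      = (s ^ 2 + t ^ 2) * m - s * t * (diverg u v + 2 * m) := by
  simp only [sub_dotProduct, dotProduct_sub, smul_dotProduct, dotProduct_smul, smul_eq_mul,
    expV_dotProduct_expV_neg, diverg_eq_dotProduct]
  ring

lemma diverg_le_of_dotProduct_smul_expV_nonneg {m : ℕ} {s t : ℝ} (hs : 0 < s) (ht : 0 < t)
    {u v : Fin m → ℝ}
    (h : 0 ≤ (s • expV u - t • expV v) ⬝ᵥ (s • expV (-u) - t • expV (-v))) :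
    diverg u v ≤ (s / t + t / s - 2) * m := by
  rw [dotProduct_smul_expV_sub] at h
  have hst : 0 < s * t := mul_pos hs ht
  have key : s * t * diverg u v ≤ s * t * ((s / t + t / s - 2) * m) := by
    calc s * t * diverg u v ≤ (s ^ 2 + t ^ 2) * m - 2 * s * t * m := by linarith
      _ = s * t * ((s / t + t / s - 2) * m) := by field_simp
  exact le_of_mul_le_mul_left key hst

lemma IsCentered.dotProduct_sub_nonneg {m n : ℕ} {A : Matrix (Fin m) (Fin n) ℝ}
    {b : Fin m → ℝ} {c : Fin n → ℝ} {W : Matrix (Fin n) (Fin n) ℝ} (hW : W.PosSemidef)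
    {μ₁ μ₂ : ℝ} {v₁ v₂ : Fin m → ℝ} {x₁ x₂ : Fin n → ℝ}
    (h₁ : IsCentered A b c W μ₁ v₁ x₁) (h₂ : IsCentered A b c W μ₂ v₂ x₂) :
    0 ≤ (√μ₁ • expV v₁ - √μ₂ • expV v₂) ⬝ᵥ (√μ₁ • expV (-v₁) - √μ₂ • expV (-v₂)) := by
  have hA : √μ₁ • expV (-v₁) - √μ₂ • expV (-v₂) = A *ᵥ (x₁ - x₂) := by
    rw [h₁.2, h₂.2, mulVec_sub]; abel
  have hAT : Aᵀ *ᵥ (√μ₁ • expV v₁ - √μ₂ • expV v₂) = W *ᵥ (x₁ - x₂) := by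
    rw [mulVec_sub, mulVec_smul, mulVec_smul, h₁.1, h₂.1, mulVec_sub]; abel
  rw [hA, dotProduct_mulVec, ← mulVec_transpose, hAT, dotProduct_comm]
  simpa using hW.dotProduct_mulVec_nonneg (x₁ - x₂)

lemma two_mul_cosh_half_log_div_sub_one {a b : ℝ} (ha : 0 < a) (hb : 0 < b) :
    2 * (Real.cosh ((1 / 2) * Real.log (a / b)) - 1) = √a / √b + √b / √a - 2 := by
  have hsa : 0 < √a := Real.sqrt_pos.mpr ha
  have hsb : 0 < √b := Real.sqrt_pos.mpr hb
  have hlog : (1 / 2) * Real.log (a / b) = Real.log (√a / √b) := by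
    rw [← Real.sqrt_div' a hb.le, Real.log_sqrt (div_pos ha hb).le]; ring
  rw [hlog, Real.cosh_log (div_pos hsa hsb), inv_div]
  ring

theorem stmt_12_general {m n : ℕ}
    (A : Matrix (Fin m) (Fin n) ℝ) (b : Fin m → ℝ) (c : Fin n → ℝ)
    (W : Matrix (Fin n) (Fin n) ℝ) (hW : W.PosSemidef)
    (μ₁ μ₂ : ℝ) (hμ₁ : 0 < μ₁) (hμ₂ : 0 < μ₂)
    (vhat₁ vhat₂ : Fin m → ℝ) (xhat₁ xhat₂ : Fin n → ℝ)
    (hcent₁ : IsCentered A b c W μ₁ vhat₁ xhat₁)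
    (hcent₂ : IsCentered A b c W μ₂ vhat₂ xhat₂) :
    (1 / (m : ℝ)) * diverg vhat₁ vhat₂
      ≤ 2 * (Real.cosh ((1 / 2) * Real.log (μ₁ / μ₂)) - 1) := by
  have hq : 0 ≤ 2 * (Real.cosh ((1 / 2) * Real.log (μ₁ / μ₂)) - 1) := by
    linarith [Real.one_le_cosh ((1 / 2) * Real.log (μ₁ / μ₂))]
  have hdiv : diverg vhat₁ vhat₂ ≤ 2 * (Real.cosh ((1 / 2) * Real.log (μ₁ / μ₂)) - 1) * m := by
    rw [two_mul_cosh_half_log_div_sub_one hμ₁ hμ₂]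
    exact diverg_le_of_dotProduct_smul_expV_nonneg (Real.sqrt_pos.mpr hμ₁)
      (Real.sqrt_pos.mpr hμ₂) (hcent₁.dotProduct_sub_nonneg hW hcent₂)
  rw [one_div_mul_eq_div]
  exact div_le_of_le_mul₀ m.cast_nonneg hq hdiv

/-- if `v̂(μ₁)` and `v̂(μ₂)` are centered points for `μ₁, μ₂ > 0`, then
`(1/m)·h(v̂(μ₁), v̂(μ₂)) ≤ q((1/2)·log(μ₁/μ₂))` where `q(t) := 2(cosh(t) − 1)`. -/
theorem stmt_12 {m n : ℕ} (hm : 0 < m)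
    (A : Matrix (Fin m) (Fin n) ℝ) (b : Fin m → ℝ) (c : Fin n → ℝ)
    (W : Matrix (Fin n) (Fin n) ℝ) (hW : W.PosSemidef) (hAW : (Aᵀ * A + W).PosDef)
    (μ₁ μ₂ : ℝ) (hμ₁ : 0 < μ₁) (hμ₂ : 0 < μ₂)
    (vhat₁ vhat₂ : Fin m → ℝ) (xhat₁ xhat₂ : Fin n → ℝ)
    (hcent₁ : IsCentered A b c W μ₁ vhat₁ xhat₁)
    (hcent₂ : IsCentered A b c W μ₂ vhat₂ xhat₂) :
    (1 / (m : ℝ)) * diverg vhat₁ vhat₂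
      ≤ 2 * (Real.cosh ((1 / 2) * Real.log (μ₁ / μ₂)) - 1) :=
  stmt_12_general A b c W hW μ₁ μ₂ hμ₁ hμ₂ vhat₁ vhat₂ xhat₁ xhat₂ hcent₁ hcent₂
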